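/- arXiv:0804.3947 — 5 statements merged into one kernel-verified Lean document; each statement's English description precedes it below -/
import Mathlib

section
/- Chaining distributes over minimum on the left in the FIFO setting: if g satisfies FIFO, then for all TTFs f₁, f₂ and all τ, (min(f₁,f₂) ⊕ g)(τ) = min((f₁ ⊕ g)(τ), (f₂ ⊕ g)(τ)). -/
/-- FIFO (no-overtaking) property of a travel-time function. -/
def FIFO (f : ℝ → ℝ) : Prop := ∀ ⦃τ τ' : ℝ⦄, τ < τ' → τ + f τ ≤ τ' + f τ'

/-- Chaining of two travel-time functions. -/
def chain (f g : ℝ → ℝ) : ℝ → ℝ := fun τ => f τ + g (τ + f τ)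

/-- A path from `s` to `t` in the graph with edge relation `E`, given as its vertex list. -/
def IsPath {V : Type*} (E : V → V → Prop) (s t : V) (p : List V) : Prop :=
  p.head? = some s ∧ p.getLast? = some t ∧ p.Chain' E

/-- Arrival time along a vertex list with time-dependent edge costs `c`, via iterated chaining. -/
def arriveP {V : Type*} (c : V → V → ℝ → ℝ) : List V → ℝ → ℝ
  | [], τ => τ
  | [_], τ => τ
  | u :: w :: rest, τ => arriveP c (w :: rest) (τ + c u w τ)

theorem FIFO.monotone_add_self {g : ℝ → ℝ} (hg : FIFO g) : Monotone fun τ => τ + g τ := by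
  intro a b hab
  rcases hab.eq_or_lt with rfl | hlt
  · exact le_rfl
  · exact hg hlt

theorem chain_eq_add_self_sub (f g : ℝ → ℝ) (τ : ℝ) :
    chain f g τ = (fun σ => σ + g σ) (τ + f τ) - τ := by
  simp only [chain]
  ring

theorem chain_min_left_distrib (g f₁ f₂ : ℝ → ℝ) (hg : FIFO g) :
    ∀ τ : ℝ, chain (fun τ => min (f₁ τ) (f₂ τ)) g τ = min (chain f₁ g τ) (chain f₂ g τ) := by
  intro τ
  rw [chain_eq_add_self_sub, chain_eq_add_self_sub, chain_eq_add_self_sub, min_sub_sub_right,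
    ← hg.monotone_add_self.map_min, min_add_add_left]
end

section
/- Correctness of shortcut contraction: let G' be a time-dependent graph with FIFO TTFs, v a node, and G'' the graph obtained by deleting v and adding, for every pair of edges (u,v), (v,w), a shortcut edge (u,w) with TTF c_{(u,v)} ⊕ c_{(v,w)}. Then for all nodes s, t ≠ v and all departure times τ, the earliest arrival time from s to t in G'' equals that in G'. -/
/-!
A path of the original graph through `v` enters and leaves `v` along edges `(u, v)`, `(v, w)`,
which the shortcut `(u, w)` replaces at no greater cost; by FIFO, reaching an intermediate node
no later never delays the final arrival, and with nonnegative costs a loop at `v` can only delay.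
Conversely, at each departure time a shortcut costs exactly as much as either the original edge
or the detour through `v`, so every path of the contracted graph expands to a path of the
original graph with the same arrival time.
-/

theorem FIFO.monotone_add {f : ℝ → ℝ} (hf : FIFO f) : Monotone fun τ => τ + f τ := by
  intro τ τ' h
  rcases h.eq_or_lt with rfl | h
  · exact le_rfl
  · exact hf h

theorem FIFO.min {f g : ℝ → ℝ} (hf : FIFO f) (hg : FIFO g) :
    FIFO fun τ => min (f τ) (g τ) := by
  intro τ τ' h
  simp only [← min_add_add_left]
  exact min_le_min (hf h) (hg h)

theorem add_chain (f g : ℝ → ℝ) (τ : ℝ) :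
    τ + chain f g τ = (τ + f τ) + g (τ + f τ) := by
  simp only [chain]; ring

theorem FIFO.chain {f g : ℝ → ℝ} (hf : FIFO f) (hg : FIFO g) : FIFO (chain f g) := by
  intro τ τ' h
  rw [add_chain, add_chain]
  exact hg.monotone_add (hf h)

section Paths

variable {V : Type*} {E : V → V → Prop} {c : V → V → ℝ → ℝ}

theorem isPath_iff {s t : V} {p : List V} :
    IsPath E s t p ↔ p.head? = some s ∧ p.getLast? = some t ∧ p.IsChain E :=
  Iff.rfl

theorem isPath_singleton {u t : V} : IsPath E u t [u] ↔ u = t := by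
  simp [isPath_iff]

theorem isPath_cons_cons {u w t : V} {rest : List V} :
    IsPath E u t (u :: w :: rest) ↔ E u w ∧ IsPath E w t (w :: rest) := by
  simp [isPath_iff, List.isChain_cons_cons, and_left_comm]

theorem IsPath.eq_cons {s t : V} {p : List V} (hp : IsPath E s t p) : ∃ rest, p = s :: rest := by
  obtain ⟨hhead, -⟩ := hp
  cases p with
  | nil => simp at hhead
  | cons x rest => exact ⟨rest, by simpa using hhead⟩

theorem IsPath.head_eq {u x t : V} {rest : List V} (hp : IsPath E u t (x :: rest)) : x = u := by
  simpa using hp.eq_cons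

theorem IsPath.cons {u w t : V} {p : List V} (huw : E u w) (hp : IsPath E w t p) :
    IsPath E u t (u :: p) := by
  obtain ⟨rest, rfl⟩ := hp.eq_cons
  exact isPath_cons_cons.mpr ⟨huw, hp⟩

theorem IsPath.arriveP_cons {w t : V} {p : List V} (hp : IsPath E w t p) (u : V) (τ : ℝ) :
    arriveP c (u :: p) τ = arriveP c p (τ + c u w τ) := by
  obtain ⟨rest, rfl⟩ := hp.eq_cons
  rfl

theorem IsPath.arriveP_cons_cons {w t : V} {p : List V} (hp : IsPath E w t p) (u x : V) (τ : ℝ) :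
    arriveP c (u :: x :: p) τ = arriveP c p (τ + chain (c u x) (c x w) τ) := by
  obtain ⟨rest, rfl⟩ := hp.eq_cons
  rw [add_chain]
  rfl

theorem arriveP_monotone (hF : ∀ u w, E u w → FIFO (c u w)) :
    ∀ {p : List V}, p.IsChain E → Monotone (arriveP c p)
  | [], _ => fun _ _ h => h
  | [_], _ => fun _ _ h => h
  | u :: w :: rest, hp => by
    rw [List.isChain_cons_cons] at hp
    exact fun _ _ h => arriveP_monotone hF hp.2 ((hF u w hp.1).monotone_add h)

theorem IsPath.arriveP_monotone {s t : V} {p : List V} (hp : IsPath E s t p)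
    (hF : ∀ u w, E u w → FIFO (c u w)) : Monotone (arriveP c p) :=
  _root_.arriveP_monotone hF hp.2.2

theorem IsPath.arriveP_cons_le {u w t : V} {p : List V} (hp : IsPath E w t p)
    (hF : ∀ u w, E u w → FIFO (c u w)) {τ d : ℝ} (hd : c u w τ ≤ d) :
    arriveP c (u :: p) τ ≤ arriveP c p (τ + d) := by
  rw [hp.arriveP_cons]
  exact hp.arriveP_monotone hF (add_le_add_right hd τ)

end Paths

section Contraction

variable {V : Type*} {E' E'' : V → V → Prop} {c c'' : V → V → ℝ → ℝ} {v t : V}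

theorem exists_path_arriveP_eq_of_cost_eq
    (hcost : ∀ u w τ, E'' u w → (E' u w ∧ c'' u w τ = c u w τ) ∨
      (E' u v ∧ E' v w ∧ c'' u w τ = chain (c u v) (c v w) τ)) :
    ∀ (q : List V) (u : V) (τ : ℝ), IsPath E'' u t q →
      ∃ p, IsPath E' u t p ∧ arriveP c p τ = arriveP c'' q τ
  | [], _, _, hq => absurd hq.1 (by simp)
  | [x], _, _, hq => by
    obtain rfl := hq.head_eq
    exact ⟨[x], isPath_singleton.mpr (isPath_singleton.mp hq), rfl⟩
  | x :: w :: rest, _, τ, hq => by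
    obtain rfl := hq.head_eq
    obtain ⟨hxw, hw⟩ := isPath_cons_cons.mp hq
    obtain ⟨p, hp, heq⟩ :=
      exists_path_arriveP_eq_of_cost_eq hcost (w :: rest) w (τ + c'' x w τ) hw
    rcases hcost x w τ hxw with ⟨hE, hc⟩ | ⟨hxv, hvw, hc⟩
    · exact ⟨x :: p, hp.cons hE, by rw [hp.arriveP_cons, ← hc, heq]; rfl⟩
    · exact ⟨x :: v :: p, (hp.cons hvw).cons hxv, by rw [hp.arriveP_cons_cons, ← hc, heq]; rfl⟩

/-- A path starting at `v` is treated together with an edge `(u, v)` entering it, which keeps the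
induction structural. -/
theorem exists_path_arriveP_le_of_cost_le (ht : t ≠ v)
    (hF : ∀ u w, E' u w → FIFO (c u w)) (hF'' : ∀ u w, E'' u w → FIFO (c'' u w))
    (hloop : ∀ τ, 0 ≤ c v v τ)
    (hdirect : ∀ u w, u ≠ v → w ≠ v → E' u w → E'' u w ∧ ∀ τ, c'' u w τ ≤ c u w τ)
    (hshortcut : ∀ u w, u ≠ v → w ≠ v → E' u v → E' v w →
      E'' u w ∧ ∀ τ, c'' u w τ ≤ chain (c u v) (c v w) τ) :
    ∀ (p : List V) (x : V), IsPath E' x t p →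
      (x ≠ v → ∃ q, IsPath E'' x t q ∧ ∀ τ, arriveP c'' q τ ≤ arriveP c p τ) ∧
      (x = v → ∀ u, u ≠ v → E' u v →
        ∃ q, IsPath E'' u t q ∧ ∀ τ, arriveP c'' q τ ≤ arriveP c (u :: p) τ)
  | [], _, hp => absurd hp.1 (by simp)
  | [x], _, hp => by
    obtain rfl := hp.head_eq
    obtain rfl := isPath_singleton.mp hp
    exact ⟨fun _ => ⟨[x], isPath_singleton.mpr rfl, fun _ => le_rfl⟩, fun hxv => absurd hxv ht⟩
  | x :: y :: rest, _, hp => by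
    obtain rfl := hp.head_eq
    obtain ⟨hxy, hy⟩ := isPath_cons_cons.mp hp
    obtain ⟨ih_ne, ih_eq⟩ :=
      exists_path_arriveP_le_of_cost_le ht hF hF'' hloop hdirect hshortcut (y :: rest) y hy
    obtain rfl | hyv := eq_or_ne y v
    · refine ⟨fun hxv => ih_eq rfl x hxv hxy, ?_⟩
      rintro rfl u hu huy
      obtain ⟨q, hq, hle⟩ := ih_eq rfl u hu huy
      exact ⟨q, hq, fun τ => (hle τ).trans
        (hy.arriveP_monotone hF (le_add_of_nonneg_right (hloop _)))⟩
    · obtain ⟨q, hq, hle⟩ := ih_ne hyv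
      refine ⟨fun hxv => ?_, ?_⟩
      · obtain ⟨hxy'', hc⟩ := hdirect x y hxv hyv hxy
        exact ⟨x :: q, hq.cons hxy'', fun τ => (hq.arriveP_cons_le hF'' (hc τ)).trans (hle _)⟩
      · rintro rfl u hu hux
        obtain ⟨hux'', hc⟩ := hshortcut u y hu hyv hux hxy
        refine ⟨u :: q, hq.cons hux'', fun τ => (hq.arriveP_cons_le hF'' (hc τ)).trans ?_⟩
        rw [hy.arriveP_cons_cons]
        exact hle _

structure IsContraction (E' : V → V → Prop) (c : V → V → ℝ → ℝ) (v : V)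
    (E'' : V → V → Prop) (c'' : V → V → ℝ → ℝ) : Prop where
  adj_iff : ∀ u w, E'' u w ↔ u ≠ v ∧ w ≠ v ∧ (E' u w ∨ (E' u v ∧ E' v w))
  cost_min : ∀ u w, u ≠ v → w ≠ v → E' u v → E' v w → E' u w →
    c'' u w = fun τ => min (c u w τ) (chain (c u v) (c v w) τ)
  cost_shortcut : ∀ u w, u ≠ v → w ≠ v → E' u v → E' v w → ¬ E' u w →
    c'' u w = chain (c u v) (c v w)
  cost_of_not_via : ∀ u w, ¬ (E' u v ∧ E' v w) → c'' u w = c u w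

namespace IsContraction

variable (hG : IsContraction E' c v E'' c'')
include hG

theorem fifo (hF : ∀ u w, E' u w → FIFO (c u w)) : ∀ u w, E'' u w → FIFO (c'' u w) := by
  intro u w huw
  obtain ⟨hu, hw, hE⟩ := (hG.adj_iff u w).mp huw
  by_cases hvia : E' u v ∧ E' v w
  · have hchain := (hF u v hvia.1).chain (hF v w hvia.2)
    by_cases huw' : E' u w
    · rw [hG.cost_min u w hu hw hvia.1 hvia.2 huw']
      exact (hF u w huw').min hchain
    · rwa [hG.cost_shortcut u w hu hw hvia.1 hvia.2 huw']
  · rw [hG.cost_of_not_via u w hvia]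
    exact hF u w (hE.resolve_right hvia)

theorem cost_le_of_adj (u w : V) (hu : u ≠ v) (hw : w ≠ v) (huw : E' u w) :
    E'' u w ∧ ∀ τ, c'' u w τ ≤ c u w τ := by
  refine ⟨(hG.adj_iff u w).mpr ⟨hu, hw, .inl huw⟩, fun τ => ?_⟩
  by_cases hvia : E' u v ∧ E' v w
  · rw [hG.cost_min u w hu hw hvia.1 hvia.2 huw]
    exact min_le_left _ _
  · rw [hG.cost_of_not_via u w hvia]

theorem cost_le_chain (u w : V) (hu : u ≠ v) (hw : w ≠ v) (huv : E' u v) (hvw : E' v w) :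
    E'' u w ∧ ∀ τ, c'' u w τ ≤ chain (c u v) (c v w) τ := by
  refine ⟨(hG.adj_iff u w).mpr ⟨hu, hw, .inr ⟨huv, hvw⟩⟩, fun τ => ?_⟩
  by_cases huw : E' u w
  · rw [hG.cost_min u w hu hw huv hvw huw]
    exact min_le_right _ _
  · rw [hG.cost_shortcut u w hu hw huv hvw huw]

theorem cost_eq_or (u w : V) (τ : ℝ) (huw : E'' u w) :
    (E' u w ∧ c'' u w τ = c u w τ) ∨ (E' u v ∧ E' v w ∧ c'' u w τ = chain (c u v) (c v w) τ) := by
  obtain ⟨hu, hw, hE⟩ := (hG.adj_iff u w).mp huw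
  by_cases hvia : E' u v ∧ E' v w
  · by_cases huw' : E' u w
    · rw [hG.cost_min u w hu hw hvia.1 hvia.2 huw']
      rcases min_choice (c u w τ) (chain (c u v) (c v w) τ) with h | h
      · exact .inl ⟨huw', h⟩
      · exact .inr ⟨hvia.1, hvia.2, h⟩
    · exact .inr ⟨hvia.1, hvia.2, by rw [hG.cost_shortcut u w hu hw hvia.1 hvia.2 huw']⟩
  · exact .inl ⟨hE.resolve_right hvia, by rw [hG.cost_of_not_via u w hvia]⟩

end IsContraction

end Contraction

theorem contraction_preserves_earliest_arrival {V : Type*}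
    (E' : V → V → Prop) (c : V → V → ℝ → ℝ)
    (hF : ∀ u w, FIFO (c u w)) (hnn : ∀ u w τ, 0 ≤ c u w τ)
    (v s t : V) (hs : s ≠ v) (ht : t ≠ v)
    (E'' : V → V → Prop)
    (hE'' : ∀ u w, E'' u w ↔ u ≠ v ∧ w ≠ v ∧ (E' u w ∨ (E' u v ∧ E' v w)))
    (c'' : V → V → ℝ → ℝ)
    (hc''min : ∀ u w, u ≠ v → w ≠ v → E' u v → E' v w → E' u w →
      c'' u w = fun τ => min (c u w τ) (chain (c u v) (c v w) τ))
    (hc''sc : ∀ u w, u ≠ v → w ≠ v → E' u v → E' v w → ¬ E' u w →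
      c'' u w = chain (c u v) (c v w))
    (hc''old : ∀ u w, ¬ (E' u v ∧ E' v w) → c'' u w = c u w)
    (EA' EA'' : ℝ → ℝ)
    (hAtt' : ∀ τ, ∃ p, IsPath E' s t p ∧ arriveP c p τ = EA' τ)
    (hMin' : ∀ τ p, IsPath E' s t p → EA' τ ≤ arriveP c p τ)
    (hAtt'' : ∀ τ, ∃ p, IsPath E'' s t p ∧ arriveP c'' p τ = EA'' τ)
    (hMin'' : ∀ τ p, IsPath E'' s t p → EA'' τ ≤ arriveP c'' p τ) :
    ∀ τ, EA'' τ = EA' τ := by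
  intro τ
  have hG : IsContraction E' c v E'' c'' := ⟨hE'', hc''min, hc''sc, hc''old⟩
  have hF' : ∀ u w, E' u w → FIFO (c u w) := fun u w _ => hF u w
  apply le_antisymm
  · obtain ⟨p, hp, harr⟩ := hAtt' τ
    obtain ⟨q, hq, hle⟩ := (exists_path_arriveP_le_of_cost_le ht hF' (hG.fifo hF') (hnn v v)
      hG.cost_le_of_adj hG.cost_le_chain p s hp).1 hs
    calc EA'' τ ≤ arriveP c'' q τ := hMin'' τ q hq
      _ ≤ arriveP c p τ := hle τ
      _ = EA' τ := harr
  · obtain ⟨q, hq, harr⟩ := hAtt'' τ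
    obtain ⟨p, hp, heq⟩ :=
      exists_path_arriveP_eq_of_cost_eq hG.cost_eq_or q s τ hq
    calc EA' τ ≤ arriveP c p τ := hMin' τ p hp
      _ = arriveP c'' q τ := heq
      _ = EA'' τ := harr
end

section
/- Pruning with lower bounds is correct: in a time-dependent network with FIFO TTFs, if ℓ(v) is a lower bound on the travel time from v to t over all departure times, U is an upper bound on the earliest arrival time from s to t departing at τ₀ (measured as travel time), and d(s,v) is the travel time of some s–v path departing at τ₀ with d(s,v) + ℓ(v) > U, then no earliest-arrival s–t path departing at τ₀ extends that s–v path. -/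
lemma arriveP_append {V : Type*} (c : V → V → ℝ → ℝ) (v : V) :
    ∀ (p : List V) (p₂ : List V) (τ : ℝ), p.getLast? = some v →
      arriveP c (p ++ p₂) τ = arriveP c (v :: p₂) (arriveP c p τ)
  | [], _, _, h => by simp at h
  | [u], p₂, τ, h => by
    simp [List.getLast?] at h
    subst h
    simp [arriveP]
  | u :: w :: rest, p₂, τ, h => by
    have h' : (w :: rest).getLast? = some v := by
      simpa [List.getLast?_cons_cons] using h
    simp only [List.cons_append, arriveP]
    exact arriveP_append c v (w :: rest) p₂ (τ + c u w τ) h'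

theorem lower_bound_pruning {V : Type*} (E : V → V → Prop) (c : V → V → ℝ → ℝ)
    (hF : ∀ u w, FIFO (c u w)) (hnn : ∀ u w τ, 0 ≤ c u w τ)
    (s t v : V) (τ₀ : ℝ)
    (EA : ℝ → ℝ)
    (hMin : ∀ p, IsPath E s t p → EA τ₀ ≤ arriveP c p τ₀)
    (ℓv U : ℝ)
    (hℓ : ∀ τ p₂, IsPath E v t (v :: p₂) → ℓv ≤ arriveP c (v :: p₂) τ - τ)
    (hU : EA τ₀ - τ₀ ≤ U)
    (p : List V) (hp : IsPath E s v p)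
    (hprune : (arriveP c p τ₀ - τ₀) + ℓv > U) :
    ∀ p₂, IsPath E v t (v :: p₂) → EA τ₀ < arriveP c (p ++ p₂) τ₀ := by
  intro p₂ hp₂
  have hsplit := arriveP_append c v p p₂ τ₀ hp.2.1
  have hℓ' := hℓ (arriveP c p τ₀) p₂ hp₂
  have : EA τ₀ ≤ U + τ₀ := by linarith
  calc EA τ₀ ≤ U + τ₀ := this
    _ < arriveP c p τ₀ + ℓv := by linarith
    _ ≤ arriveP c (v :: p₂) (arriveP c p τ₀) := by linarith
    _ = arriveP c (p ++ p₂) τ₀ := hsplit.symm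
end

section
/- Chaining is monotone in both arguments under FIFO: if f₁ ≤ f₂ and g₁ ≤ g₂ pointwise and g₁ satisfies FIFO, then (f₁ ⊕ g₁)(τ) ≤ (f₂ ⊕ g₂)(τ) for all τ. -/
theorem chain_monotone (f₁ f₂ g₁ g₂ : ℝ → ℝ)
    (hf : ∀ τ, f₁ τ ≤ f₂ τ) (hg : ∀ τ, g₁ τ ≤ g₂ τ) (hg₁ : FIFO g₁) :
    ∀ τ, chain f₁ g₁ τ ≤ chain f₂ g₂ τ := by
  intro τ
  unfold chain
  have h1 : τ + f₁ τ + g₁ (τ + f₁ τ) ≤ τ + f₂ τ + g₁ (τ + f₂ τ) := by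
    rcases lt_or_eq_of_le (hf τ) with h | h
    · exact hg₁ (by linarith)
    · rw [h]
  have h2 := hg (τ + f₂ τ)
  linarith
end

section
/- Upper/lower bounds propagate through chaining: if a̲ ≤ a ≤ ā and b̲ ≤ b ≤ b̄ pointwise, and b̲ and b̄ satisfy FIFO, then (a̲ ⊕ b̲) ≤ (a ⊕ b) ≤ (ā ⊕ b̄) pointwise. -/
lemma FIFO.le {f : ℝ → ℝ} (hf : FIFO f) {τ τ' : ℝ} (h : τ ≤ τ') :
    τ + f τ ≤ τ' + f τ' := by
  rcases eq_or_lt_of_le h with rfl | h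
  · exact le_refl _
  · exact hf h

theorem chain_bounds_propagate (a aLow aUp b bLow bUp : ℝ → ℝ)
    (haL : ∀ τ, aLow τ ≤ a τ) (haU : ∀ τ, a τ ≤ aUp τ)
    (hbL : ∀ τ, bLow τ ≤ b τ) (hbU : ∀ τ, b τ ≤ bUp τ)
    (hbLF : FIFO bLow) (hbUF : FIFO bUp) :
    (∀ τ, chain aLow bLow τ ≤ chain a b τ) ∧ (∀ τ, chain a b τ ≤ chain aUp bUp τ) := by
  constructor
  · intro τ
    have h1 : (τ + aLow τ) + bLow (τ + aLow τ) ≤ (τ + a τ) + bLow (τ + a τ) :=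
      hbLF.le (by linarith [haL τ])
    have h2 := hbL (τ + a τ)
    simp only [chain]; linarith
  · intro τ
    have h1 : (τ + a τ) + bUp (τ + a τ) ≤ (τ + aUp τ) + bUp (τ + aUp τ) :=
      hbUF.le (by linarith [haU τ])
    have h2 := hbU (τ + a τ)
    simp only [chain]; linarith
end
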